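/- Let p, q be coprime positive integers with q odd, and k a positive integer, and let Λ_{k,q,2} = (1/(2k))ℤ × ℤ⁴ × πqℤ, a lattice of Osc₂(1, p/q). Then the normalizer of Λ_{k,q,2} in Osc₂(1, p/q) is: N(Λ_{k,q,2}) = ℝ × (1/2)ℤ² × (1/(2k))ℤ² × (qπ/2)ℤ if p is even, and N(Λ_{k,q,2}) = ℝ × (1/2)ℤ⁴ × (qπ/2)ℤ if p is odd. That is, g = (z, (v₁,v₂,v₃,v₄), t) normalizes Λ_{k,q,2} if and only if t ∈ (qπ/2)ℤ, (v₁,v₂) ∈ (1/2)ℤ², and (v₃,v₄) ∈ (1/(2k))ℤ² when p is even, respectively (v₃,v₄) ∈ (1/2)ℤ² when p is odd. -/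

import Mathlib

/-!
Write `ω(a, b) = aᵀ J b` and `Rᵢ(t)` for the rotation by `λᵢ t` of the `i`-th factor `ℝ²`.
Conjugation by `g = (z, v, t)` sends `(w, u, s)` to
`(w + ½ Σᵢ (ω(vᵢ, Rᵢ(t)uᵢ) - ω(vᵢ + Rᵢ(t)uᵢ, Rᵢ(s)vᵢ)), v + R(t)u - R(s)v, s)`.

If `g` normalizes the lattice, conjugating the points `(0, u, 0)` with `u` a unit vector in one
factor shows that `R(t)` and `R(pt/q)` have integer entries, so `t` and `pt/q` lie in `(π/2)ℤ`
and, `p` and `q` being coprime, `t ∈ (qπ/2)ℤ`; the central coordinate `ω(v₂, R₂(t)u₂)` of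
these conjugates then forces `v₂ ∈ (1/2k)ℤ²`. Conjugating `(0, 0, πq)`, where `R₁(πq) = -1`
because `q` is odd, and `R₂(πq) = R(pπ) = -1` when `p` is odd, gives `2vᵢ ∈ ℤ²`.

Conversely, for `s ∈ πqℤ` each factor has either `Rᵢ(s)vᵢ = vᵢ` or `Rᵢ(s)vᵢ = -vᵢ` with
`vᵢ ∈ ½ℤ²`, and in both cases its contribution to the conjugate is integral. So conjugation by
`g` maps the lattice into itself, and as the conditions on `g` are also satisfied by `g⁻¹`, onto it.
-/

open Real

noncomputable section

/-- rotation by angle `θ` acting on `ℝ × ℝ` -/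
def rot (θ : ℝ) (p : ℝ × ℝ) : ℝ × ℝ :=
  (Real.cos θ * p.1 - Real.sin θ * p.2, Real.sin θ * p.1 + Real.cos θ * p.2)

/-- the matrix `[[0,1],[-1,0]]` acting on `ℝ × ℝ` -/
def Jpair (p : ℝ × ℝ) : ℝ × ℝ := (p.2, -p.1)

/-- euclidean inner product on `ℝ × ℝ` -/
def dot2 (p q : ℝ × ℝ) : ℝ := p.1 * q.1 + p.2 * q.2

/-- underlying set `ℝ × ℝ^{2n} × ℝ` of the oscillator group, where the middle
factor `ℝ^{2n}` is recorded as `n` pairs `(x_i, y_i)`. -/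
abbrev OscG (n : ℕ) := ℝ × (Fin n → ℝ × ℝ) × ℝ

/-- multiplication of the oscillator group `Osc_n(λ₁,…,λₙ)`:
`(z₁,v₁,t₁)·(z₂,v₂,t₂) = (z₁+z₂+½ v₁ᵀ J R(t₁) v₂, v₁ + R(t₁)v₂, t₁+t₂)`,
where `R(t)` rotates the `i`-th pair by the angle `λ_i t`. -/
def oscMul {n : ℕ} (lam : Fin n → ℝ) (g h : OscG n) : OscG n :=
  (g.1 + h.1 + (1/2) * ∑ i, dot2 (g.2.1 i) (Jpair (rot (lam i * g.2.2) (h.2.1 i))),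
   fun i => g.2.1 i + rot (lam i * g.2.2) (h.2.1 i),
   g.2.2 + h.2.2)

/-- identity element of the oscillator group -/
def oscOne (n : ℕ) : OscG n := (0, fun _ => (0, 0), 0)

/-- inverse in the oscillator group: `(z,v,t)⁻¹ = (-z, -R(-t)v, -t)` -/
def oscInv {n : ℕ} (lam : Fin n → ℝ) (g : OscG n) : OscG n :=
  (-g.1, fun i => -(rot (lam i * (-g.2.2)) (g.2.1 i)), -g.2.2)

/-- `Γ` is a lattice of the oscillator group: a discrete subgroup with compact
quotient (the quotient by the right multiplication action of `Γ`). -/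
structure IsLattice {n : ℕ} (lam : Fin n → ℝ) (Γ : Set (OscG n)) : Prop where
  one_mem : oscOne n ∈ Γ
  mul_mem : ∀ g ∈ Γ, ∀ h ∈ Γ, oscMul lam g h ∈ Γ
  inv_mem : ∀ g ∈ Γ, oscInv lam g ∈ Γ
  discrete : DiscreteTopology Γ
  cocompact : CompactSpace (Quot (fun g h : OscG n => ∃ γ ∈ Γ, h = oscMul lam g γ))

/-- `Q(X) = 2ad + Σ_k (b_k² + c_k²)/λ_k` for `X = (d,(b₁,c₁,…,bₙ,cₙ),a)` -/
def Qform {n : ℕ} (lam : Fin n → ℝ) (d a : ℝ) (b c : Fin n → ℝ) : ℝ :=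
  2 * a * d + ∑ k, (b k ^ 2 + c k ^ 2) / lam k

/-- the geodesic through the identity with initial velocity
`X = (d,(b₁,c₁,…,bₙ,cₙ),a)` for the bi-invariant Lorentzian metric on the
oscillator group. -/
def geo {n : ℕ} (lam : Fin n → ℝ) (d : ℝ) (b c : Fin n → ℝ) (a : ℝ) (s : ℝ) : OscG n :=
  if a = 0 then (d * s, fun j => (b j * s, c j * s), 0)
  else
    ((d + (1/(2*a)) * ∑ k, (b k ^ 2 + c k ^ 2) / lam k) * s
        - (1/(2*a^2)) * ∑ k, ((b k ^ 2 + c k ^ 2) / (lam k)^2) * Real.sin (lam k * a * s),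
     fun j => ((1/(a * lam j)) * (b j * Real.sin (lam j * a * s)
                  + c j * Real.cos (lam j * a * s) - c j),
               (1/(a * lam j)) * (-(b j) * Real.cos (lam j * a * s)
                  + c j * Real.sin (lam j * a * s) + b j)),
     a * s)

/-- the frequencies `(1, p/q)` of the oscillator group `Osc₂(1, p/q)` -/
def lam2 (p q : ℕ) : Fin 2 → ℝ := ![1, (p : ℝ) / q]

/-- the set `(1/(2k))ℤ × ℤ⁴ × Tℤ ⊆ Osc₂(1, p/q)` -/
def LamO2 (k : ℕ) (T : ℝ) : Set (OscG 2) :=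
  {g | (∃ m : ℤ, g.1 = m / (2 * k))
    ∧ (∀ i : Fin 2, (∃ a : ℤ, (g.2.1 i).1 = a) ∧ (∃ b : ℤ, (g.2.1 i).2 = b))
    ∧ ∃ c : ℤ, g.2.2 = c * T}

/-- conjugation `γ ↦ g γ g⁻¹` in the oscillator group -/
def oscConj {n : ℕ} (lam : Fin n → ℝ) (g : OscG n) : OscG n → OscG n :=
  fun γ => oscMul lam (oscMul lam g γ) (oscInv lam g)

lemma rot_add (a b : ℝ) (x : ℝ × ℝ) : rot (a + b) x = rot a (rot b x) := by
  simp only [rot, Real.cos_add, Real.sin_add]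
  exact Prod.ext (by ring) (by ring)

@[simp] lemma rot_zero (x : ℝ × ℝ) : rot 0 x = x := by
  simp [rot]

@[simp] lemma rot_zero_right (θ : ℝ) : rot θ 0 = 0 := by
  simp [rot]

lemma rot_add_right (θ : ℝ) (x y : ℝ × ℝ) : rot θ (x + y) = rot θ x + rot θ y := by
  simp only [rot, Prod.fst_add, Prod.snd_add, Prod.mk_add_mk]
  exact Prod.ext (by ring) (by ring)

lemma rot_neg_right (θ : ℝ) (x : ℝ × ℝ) : rot θ (-x) = -rot θ x := by
  simp only [rot, Prod.fst_neg, Prod.snd_neg, Prod.neg_mk]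
  exact Prod.ext (by ring) (by ring)

lemma rot_rot_neg (θ : ℝ) (x : ℝ × ℝ) : rot θ (rot (-θ) x) = x := by
  rw [← rot_add, add_neg_cancel, rot_zero]

lemma rot_int_mul_pi_of_even {n : ℤ} (hn : Even n) (x : ℝ × ℝ) : rot (n * π) x = x := by
  simp [rot, Real.cos_int_mul_pi, Real.sin_int_mul_pi, hn.neg_one_zpow]

lemma rot_int_mul_pi_of_odd {n : ℤ} (hn : Odd n) (x : ℝ × ℝ) : rot (n * π) x = -x := by
  ext <;> simp [rot, Real.cos_int_mul_pi, Real.sin_int_mul_pi, hn.neg_one_zpow]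

lemma rot_int_mul_pi_eq_or (n : ℤ) (x : ℝ × ℝ) : rot (n * π) x = x ∨ rot (n * π) x = -x :=
  (Int.even_or_odd n).imp (rot_int_mul_pi_of_even · x) (rot_int_mul_pi_of_odd · x)

lemma dot2_rot_Jpair_rot (θ : ℝ) (a b : ℝ × ℝ) :
    dot2 (rot θ a) (Jpair (rot θ b)) = dot2 a (Jpair b) := by
  simp only [dot2, Jpair, rot]
  linear_combination (a.1 * b.2 - a.2 * b.1) * Real.sin_sq_add_cos_sq θ

def scaledInt (d : ℝ) : AddSubgroup ℝ := AddSubgroup.zmultiples d⁻¹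

def scaledIntSq (d : ℝ) : AddSubgroup (ℝ × ℝ) := (scaledInt d).prod (scaledInt d)

lemma mem_scaledInt {d x : ℝ} : x ∈ scaledInt d ↔ ∃ m : ℤ, x = m / d := by
  simp only [scaledInt, AddSubgroup.mem_zmultiples_iff, zsmul_eq_mul, div_eq_mul_inv, eq_comm]

lemma mem_scaledIntSq_iff {d : ℝ} {x : ℝ × ℝ} :
    x ∈ scaledIntSq d ↔ x.1 ∈ scaledInt d ∧ x.2 ∈ scaledInt d :=
  AddSubgroup.mem_prod

lemma mem_scaledIntSq {d : ℝ} {x : ℝ × ℝ} :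
    x ∈ scaledIntSq d ↔ ∃ m₁ m₂ : ℤ, x = ((m₁ : ℝ) / d, (m₂ : ℝ) / d) := by
  simp only [mem_scaledIntSq_iff, mem_scaledInt, Prod.ext_iff, exists_and_left, exists_and_right]

lemma mem_scaledIntSq_one {x : ℝ × ℝ} :
    x ∈ scaledIntSq 1 ↔ (∃ a : ℤ, x.1 = a) ∧ ∃ b : ℤ, x.2 = b := by
  simp only [mem_scaledIntSq_iff, mem_scaledInt, div_one]

lemma add_self_mem_scaledIntSq_one {x : ℝ × ℝ} : x + x ∈ scaledIntSq 1 ↔ x ∈ scaledIntSq 2 := by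
  simp only [mem_scaledIntSq_iff, mem_scaledInt, Prod.fst_add, Prod.snd_add]
  constructor <;> rintro ⟨⟨a, ha⟩, ⟨b, hb⟩⟩ <;> exact ⟨⟨a, by linarith⟩, ⟨b, by linarith⟩⟩

lemma scaledIntSq_le_mul {d : ℝ} {n : ℕ} (hn : n ≠ 0) : scaledIntSq d ≤ scaledIntSq (d * n) := by
  have : scaledInt d ≤ scaledInt (d * n) := by
    refine AddSubgroup.zmultiples_le.2 (mem_scaledInt.2 ⟨n, ?_⟩)
    rcases eq_or_ne d 0 with rfl | hd
    · simp
    · push_cast; field_simp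
  exact AddSubgroup.prod_mono this this

lemma dot2_Jpair_mem_scaledInt {d : ℝ} {a b : ℝ × ℝ} (ha : a ∈ scaledIntSq d)
    (hb : b ∈ scaledIntSq 1) : dot2 a (Jpair b) ∈ scaledInt d := by
  obtain ⟨⟨c, hc⟩, ⟨e, he⟩⟩ := mem_scaledIntSq_one.1 hb
  have h : dot2 a (Jpair b) = e • a.1 - c • a.2 := by
    simp only [dot2, Jpair, hc, he, zsmul_eq_mul]; ring
  rw [h]
  exact sub_mem (zsmul_mem (mem_scaledIntSq_iff.1 ha).1 e) (zsmul_mem (mem_scaledIntSq_iff.1 ha).2 c)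

lemma rot_int_mul_pi_div_two_mem {d : ℝ} (n : ℤ) {x : ℝ × ℝ} (hx : x ∈ scaledIntSq d) :
    rot (n * (π / 2)) x ∈ scaledIntSq d := by
  induction n using Int.induction_on with
  | zero => simpa using hx
  | succ n ih =>
    rw [show ((n + 1 : ℤ) : ℝ) * (π / 2) = π / 2 + n * (π / 2) by push_cast; ring, rot_add]
    obtain ⟨h₁, h₂⟩ := mem_scaledIntSq_iff.1 ih
    exact mem_scaledIntSq_iff.2 ⟨by simpa [rot] using neg_mem h₂, by simpa [rot] using h₁⟩
  | pred n ih =>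
    rw [show ((-n - 1 : ℤ) : ℝ) * (π / 2) = -(π / 2) + -n * (π / 2) by push_cast; ring, rot_add]
    obtain ⟨h₁, h₂⟩ := mem_scaledIntSq_iff.1 ih
    exact mem_scaledIntSq_iff.2 ⟨by simpa [rot] using h₂, by simpa [rot] using neg_mem h₁⟩

lemma exists_eq_int_mul_pi_div_two_of_cos_eq {θ : ℝ} {c : ℤ} (hc : Real.cos θ = c) :
    ∃ n : ℤ, θ = n * (π / 2) := by
  have hc1 : |c| ≤ 1 := by exact_mod_cast hc ▸ Real.abs_cos_le_one θ
  rcases Int.abs_le_one_iff.1 hc1 with rfl | rfl | rfl <;> push_cast at hc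
  · obtain ⟨n, hn⟩ := Real.cos_eq_zero_iff.1 hc
    exact ⟨2 * n + 1, by rw [hn]; push_cast; ring⟩
  all_goals
    obtain ⟨n, hn⟩ := Real.sin_eq_zero_iff.1 ((Real.sin_eq_zero_iff_cos_eq (x := θ)).2 (by simp [hc]))
    exact ⟨2 * n, by rw [← hn]; push_cast; ring⟩

section OscGroup

variable {n : ℕ} (lam : Fin n → ℝ)

lemma oscMul_assoc (g h k : OscG n) :
    oscMul lam (oscMul lam g h) k = oscMul lam g (oscMul lam h k) := by
  obtain ⟨z₁, v₁, t₁⟩ := g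
  obtain ⟨z₂, v₂, t₂⟩ := h
  obtain ⟨z₃, v₃, t₃⟩ := k
  have hterm : ∀ i, dot2 (v₁ i) (Jpair (rot (lam i * t₁) (v₂ i)))
      + dot2 (v₁ i + rot (lam i * t₁) (v₂ i)) (Jpair (rot (lam i * (t₁ + t₂)) (v₃ i)))
      = dot2 (v₂ i) (Jpair (rot (lam i * t₂) (v₃ i)))
      + dot2 (v₁ i) (Jpair (rot (lam i * t₁) (v₂ i + rot (lam i * t₂) (v₃ i)))) := by
    intro i
    rw [mul_add, rot_add, ← dot2_rot_Jpair_rot (lam i * t₁) (v₂ i), rot_add_right]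
    simp only [dot2, Jpair, Prod.fst_add, Prod.snd_add]
    ring
  have hsum := Finset.sum_congr rfl fun i (_ : i ∈ Finset.univ) => hterm i
  simp only [Finset.sum_add_distrib] at hsum
  simp only [oscMul]
  refine Prod.ext ?_ (Prod.ext (funext fun i => ?_) (add_assoc _ _ _))
  · linear_combination (1 / 2 : ℝ) * hsum
  · dsimp only
    rw [mul_add, rot_add, rot_add_right, add_assoc]

lemma oscOne_mul (g : OscG n) : oscMul lam (oscOne n) g = g := by
  simp [oscMul, oscOne, dot2, Prod.mk_zero_zero]

lemma oscInv_mul (g : OscG n) : oscMul lam (oscInv lam g) g = oscOne n := by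
  obtain ⟨z, v, t⟩ := g
  have hself : ∀ a : ℝ × ℝ, dot2 (-a) (Jpair a) = 0 := fun a => by
    simp only [dot2, Jpair, Prod.fst_neg, Prod.snd_neg]; ring
  simp [oscMul, oscInv, oscOne, hself, Prod.mk_zero_zero]

/- A type synonym, so that the group law of the oscillator group does not clash with the
componentwise multiplication of the product type `OscG n`. -/
def Osc (_lam : Fin n → ℝ) : Type := OscG n

instance : Mul (Osc lam) := ⟨oscMul lam⟩
instance : One (Osc lam) := ⟨oscOne n⟩
instance : Inv (Osc lam) := ⟨oscInv lam⟩

instance : Group (Osc lam) :=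
  Group.ofLeftAxioms (oscMul_assoc lam) (oscOne_mul lam) (oscInv_mul lam)

lemma oscConj_oscConj_oscInv (g γ : Osc lam) :
    oscConj lam g (oscConj lam (oscInv lam g) γ) = γ := by
  change g * (g⁻¹ * γ * g⁻¹⁻¹) * g⁻¹ = γ
  group

lemma oscConj_apply (z w t s : ℝ) (v u : Fin n → ℝ × ℝ) :
    oscConj lam (z, v, t) (w, u, s) =
      (w + 1 / 2 * ∑ i, (dot2 (v i) (Jpair (rot (lam i * t) (u i)))
          - dot2 (v i + rot (lam i * t) (u i)) (Jpair (rot (lam i * s) (v i)))),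
        fun i => v i + rot (lam i * t) (u i) - rot (lam i * s) (v i), s) := by
  have hback : ∀ i, rot (lam i * (t + s)) (-rot (lam i * -t) (v i)) = -rot (lam i * s) (v i) :=
    fun i => by rw [rot_neg_right, ← rot_add]; ring_nf
  simp only [oscConj, oscMul, oscInv, hback]
  refine Prod.ext ?_ (Prod.ext (funext fun i => ?_) (by ring))
  · have hneg : ∀ a b : ℝ × ℝ, dot2 a (Jpair (-b)) = -dot2 a (Jpair b) := fun a b => by
      simp only [dot2, Jpair, Prod.fst_neg, Prod.snd_neg]; ring
    simp only [hneg, Finset.sum_neg_distrib, Finset.sum_sub_distrib]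
    ring
  · exact (sub_eq_add_neg _ _).symm

lemma oscConj_single (z t : ℝ) (v : Fin n → ℝ × ℝ) (i : Fin n) (x : ℝ × ℝ) :
    oscConj lam (z, v, t) (0, Pi.single i x, 0) =
      (dot2 (v i) (Jpair (rot (lam i * t) x)), Pi.single i (rot (lam i * t) x), 0) := by
  have hterm : ∀ a b : ℝ × ℝ, dot2 a (Jpair b) - dot2 (a + b) (Jpair a) = 2 * dot2 a (Jpair b) :=
    fun a b => by simp only [dot2, Jpair, Prod.fst_add, Prod.snd_add]; ring
  have hsingle : ∀ j, rot (lam j * t) ((Pi.single i x : Fin n → ℝ × ℝ) j)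
      = (Pi.single i (rot (lam i * t) x) : Fin n → ℝ × ℝ) j :=
    fun j => by rcases eq_or_ne j i with rfl | hj <;> simp [*]
  rw [oscConj_apply]
  simp only [mul_zero, rot_zero, add_sub_cancel_left, hterm, ← Finset.mul_sum, hsingle]
  refine Prod.ext ?_ rfl
  dsimp only
  rw [Fintype.sum_eq_single i fun j hj => by simp [hj, dot2, Jpair]]
  simp

lemma oscConj_time_snd (g : OscG n) (s : ℝ) (i : Fin n) :
    (oscConj lam g (0, 0, s)).2.1 i = g.2.1 i - rot (lam i * s) (g.2.1 i) := by
  obtain ⟨z, v, t⟩ := g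
  simp [oscConj_apply]

end OscGroup

lemma mem_scaledIntSq_of_dot2_Jpair_rot_mem {d θ : ℝ} {v : ℝ × ℝ} (hθ : ∃ n : ℤ, θ = n * (π / 2))
    (h₁ : dot2 v (Jpair (rot θ (1, 0))) ∈ scaledInt d)
    (h₂ : dot2 v (Jpair (rot θ (0, 1))) ∈ scaledInt d) : v ∈ scaledIntSq d := by
  obtain ⟨n, rfl⟩ := hθ
  set w := rot (-(n * (π / 2))) v
  have hv : v = rot (n * (π / 2)) w := (rot_rot_neg _ v).symm
  rw [hv, dot2_rot_Jpair_rot] at h₁ h₂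
  have hw : w ∈ scaledIntSq d :=
    mem_scaledIntSq_iff.2 ⟨by simpa [dot2, Jpair] using h₂, by simpa [dot2, Jpair] using h₁⟩
  rw [hv]
  exact rot_int_mul_pi_div_two_mem n hw

lemma oscConj_factor_mem {d : ℝ} {v A w : ℝ × ℝ} (hv : v ∈ scaledIntSq d) (hA : A ∈ scaledIntSq 1)
    (hw : w = v ∨ (w = -v ∧ v ∈ scaledIntSq 2)) :
    v + A - w ∈ scaledIntSq 1 ∧
      1 / 2 * (dot2 v (Jpair A) - dot2 (v + A) (Jpair w)) ∈ scaledInt d := by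
  rcases hw with rfl | ⟨rfl, hv₂⟩
  · refine ⟨by simpa using hA, ?_⟩
    convert dot2_Jpair_mem_scaledInt hv hA using 1
    simp only [dot2, Jpair, Prod.fst_add, Prod.snd_add]; ring
  · refine ⟨?_, ?_⟩
    · rw [sub_neg_eq_add, add_right_comm]
      exact add_mem (add_self_mem_scaledIntSq_one.2 hv₂) hA
    · convert zero_mem (scaledInt d) using 1
      simp only [dot2, Jpair, Prod.fst_add, Prod.snd_add, Prod.fst_neg, Prod.snd_neg]; ring

lemma mem_LamO2 {k : ℕ} {T : ℝ} {g : OscG 2} :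
    g ∈ LamO2 k T ↔
      g.1 ∈ scaledInt (2 * k) ∧ (∀ i, g.2.1 i ∈ scaledIntSq 1) ∧ ∃ c : ℤ, g.2.2 = c * T := by
  simp only [LamO2, Set.mem_ofPred_eq, mem_scaledInt, mem_scaledIntSq_one]

section Lam2

variable {p q : ℕ}

@[simp] lemma lam2_zero : lam2 p q 0 = 1 := rfl

@[simp] lemma lam2_one : lam2 p q 1 = p / q := rfl

lemma lam2_mul_int_mul_pi_mul (hq : q ≠ 0) (c : ℤ) :
    lam2 p q 0 * (c * (π * q)) = ((c * q : ℤ) : ℝ) * π ∧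
      lam2 p q 1 * (c * (π * q)) = ((c * p : ℤ) : ℝ) * π := by
  refine ⟨by simp only [lam2_zero]; push_cast; ring, ?_⟩
  simp only [lam2_one]; push_cast; field_simp

lemma exists_lam2_mul_eq_int_mul_pi_div_two (hq : q ≠ 0) (m : ℤ) (i : Fin 2) :
    ∃ n : ℤ, lam2 p q i * (m * (q * π / 2)) = n * (π / 2) := by
  fin_cases i
  · exact ⟨m * q, by simp; ring⟩
  · exact ⟨m * p, by simp; field_simp⟩

lemma exists_eq_int_mul_of_coprime (hq : q ≠ 0) (hpq : Nat.Coprime p q) {t : ℝ}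
    (h₀ : ∃ n : ℤ, t = n * (π / 2)) (h₁ : ∃ n : ℤ, (p / q : ℝ) * t = n * (π / 2)) :
    ∃ m : ℤ, t = m * (q * π / 2) := by
  obtain ⟨a, rfl⟩ := h₀
  obtain ⟨b, hb⟩ := h₁
  have hab : (p : ℤ) * a = b * q := by
    have : (p : ℝ) * a = b * q := by
      field_simp at hb
      nlinarith [hb, Real.pi_pos]
    exact_mod_cast this
  obtain ⟨m, rfl⟩ : (q : ℤ) ∣ a :=
    (Nat.isCoprime_iff_coprime.2 hpq.symm).dvd_of_dvd_mul_left ⟨b, by linarith⟩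
  exact ⟨m, by push_cast; ring⟩

end Lam2

def normalizerLamO2 (p q k : ℕ) : Set (OscG 2) :=
  {g | g.2.1 0 ∈ scaledIntSq 2 ∧ g.2.1 1 ∈ scaledIntSq (2 * k) ∧
    (Odd p → g.2.1 1 ∈ scaledIntSq 2) ∧ ∃ m : ℤ, g.2.2 = m * (q * π / 2)}

section Normalizer

variable {p q k : ℕ} {g : OscG 2}

lemma oscInv_mem_normalizerLamO2 (hq : q ≠ 0) (hg : g ∈ normalizerLamO2 p q k) :
    oscInv (lam2 p q) g ∈ normalizerLamO2 p q k := by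
  obtain ⟨z, v, t⟩ := g
  obtain ⟨hv₀, hv₁, hv₁', m, rfl⟩ := hg
  have hrot : ∀ i {d : ℝ}, v i ∈ scaledIntSq d →
      -rot (lam2 p q i * -(m * (q * π / 2))) (v i) ∈ scaledIntSq d := fun i d hv => by
    obtain ⟨n, hn⟩ := exists_lam2_mul_eq_int_mul_pi_div_two (p := p) hq (-m) i
    rw [show -((m : ℝ) * (q * π / 2)) = ((-m : ℤ) : ℝ) * (q * π / 2) by push_cast; ring, hn]
    exact neg_mem (rot_int_mul_pi_div_two_mem n hv)
  exact ⟨hrot 0 hv₀, hrot 1 hv₁, fun hp => hrot 1 (hv₁' hp), -m, by simp [oscInv]⟩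

lemma mapsTo_oscConj_LamO2 (hq : q ≠ 0) (hk : k ≠ 0) (hg : g ∈ normalizerLamO2 p q k) :
    Set.MapsTo (oscConj (lam2 p q) g) (LamO2 k (π * q)) (LamO2 k (π * q)) := by
  obtain ⟨z, v, t⟩ := g
  obtain ⟨hv₀, hv₁, hv₁', m, rfl⟩ := hg
  rintro ⟨w, u, s⟩ hγ
  obtain ⟨hw, hu, c, rfl⟩ := mem_LamO2.1 hγ
  have hA : ∀ i, rot (lam2 p q i * (m * (q * π / 2))) (u i) ∈ scaledIntSq 1 := fun i => by
    obtain ⟨n, hn⟩ := exists_lam2_mul_eq_int_mul_pi_div_two (p := p) hq m i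
    rw [hn]
    exact rot_int_mul_pi_div_two_mem n (hu i)
  have hv : ∀ i, v i ∈ scaledIntSq (2 * k) :=
    Fin.forall_fin_two.2 ⟨scaledIntSq_le_mul hk hv₀, hv₁⟩
  obtain ⟨hs₀, hs₁⟩ := lam2_mul_int_mul_pi_mul (p := p) hq c
  have hw' : ∀ i, rot (lam2 p q i * (c * (π * q))) (v i) = v i ∨
      (rot (lam2 p q i * (c * (π * q))) (v i) = -v i ∧ v i ∈ scaledIntSq 2) := by
    refine Fin.forall_fin_two.2 ⟨?_, ?_⟩
    · rw [hs₀]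
      exact (rot_int_mul_pi_eq_or _ _).imp_right (⟨·, hv₀⟩)
    · rw [hs₁]
      rcases Nat.even_or_odd p with hp | hp
      · exact Or.inl (rot_int_mul_pi_of_even (hp.natCast.mul_left c) _)
      · exact (rot_int_mul_pi_eq_or _ _).imp_right (⟨·, hv₁' hp⟩)
  have hslot := fun i => oscConj_factor_mem (hv i) (hA i) (hw' i)
  rw [oscConj_apply, mem_LamO2]
  refine ⟨?_, fun i => (hslot i).1, c, rfl⟩
  rw [Finset.mul_sum]
  exact add_mem hw (sum_mem fun i _ => (hslot i).2)

lemma oscConj_single_mem_of_mapsTo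
    (h : Set.MapsTo (oscConj (lam2 p q) g) (LamO2 k (π * q)) (LamO2 k (π * q))) (i : Fin 2)
    {x : ℝ × ℝ} (hx : x ∈ scaledIntSq 1) :
    rot (lam2 p q i * g.2.2) x ∈ scaledIntSq 1 ∧
      dot2 (g.2.1 i) (Jpair (rot (lam2 p q i * g.2.2) x)) ∈ scaledInt (2 * k) := by
  obtain ⟨z, v, t⟩ := g
  have hmem : ((0 : ℝ), Pi.single i x, (0 : ℝ)) ∈ LamO2 k (π * q) := by
    refine mem_LamO2.2 ⟨zero_mem _, fun j => ?_, 0, by simp⟩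
    rcases eq_or_ne j i with rfl | hj
    · simpa using hx
    · simp [hj]
  have himg := mem_LamO2.1 (h hmem)
  rw [oscConj_single] at himg
  exact ⟨by simpa using himg.2.1 i, himg.1⟩

lemma mem_scaledIntSq_two_of_mapsTo
    (h : Set.MapsTo (oscConj (lam2 p q) g) (LamO2 k (π * q)) (LamO2 k (π * q))) (i : Fin 2)
    {n : ℤ} (hn : Odd n) (hθ : lam2 p q i * ((1 : ℤ) * (π * q)) = n * π) :
    g.2.1 i ∈ scaledIntSq 2 := by
  have himg := mem_LamO2.1 (h (x := (0, 0, ((1 : ℤ) : ℝ) * (π * q)))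
    (mem_LamO2.2 ⟨zero_mem _, fun _ => zero_mem _, 1, rfl⟩))
  have hi := himg.2.1 i
  rwa [oscConj_time_snd, hθ, rot_int_mul_pi_of_odd hn, sub_neg_eq_add, add_self_mem_scaledIntSq_one] at hi

lemma mem_normalizerLamO2_of_mapsTo (hq : q ≠ 0) (hpq : Nat.Coprime p q) (hqodd : Odd q)
    (h : Set.MapsTo (oscConj (lam2 p q) g) (LamO2 k (π * q)) (LamO2 k (π * q))) :
    g ∈ normalizerLamO2 p q k := by
  have he₁ : ((1 : ℝ), (0 : ℝ)) ∈ scaledIntSq 1 := mem_scaledIntSq_one.2 ⟨⟨1, by simp⟩, ⟨0, by simp⟩⟩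
  have he₂ : ((0 : ℝ), (1 : ℝ)) ∈ scaledIntSq 1 := mem_scaledIntSq_one.2 ⟨⟨0, by simp⟩, ⟨1, by simp⟩⟩
  have hquarter : ∀ i, ∃ n : ℤ, lam2 p q i * g.2.2 = n * (π / 2) := fun i => by
    obtain ⟨⟨c, hc⟩, -⟩ := mem_scaledIntSq_one.1 (oscConj_single_mem_of_mapsTo h i he₁).1
    exact exists_eq_int_mul_pi_div_two_of_cos_eq (by simpa [rot] using hc)
  obtain ⟨hs₀, hs₁⟩ := lam2_mul_int_mul_pi_mul (p := p) hq 1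
  refine ⟨mem_scaledIntSq_two_of_mapsTo h 0 (by simpa using hqodd) hs₀, ?_,
    fun hp => mem_scaledIntSq_two_of_mapsTo h 1 (by simpa using hp) hs₁, ?_⟩
  · exact mem_scaledIntSq_of_dot2_Jpair_rot_mem (hquarter 1)
      (oscConj_single_mem_of_mapsTo h 1 he₁).2 (oscConj_single_mem_of_mapsTo h 1 he₂).2
  · exact exists_eq_int_mul_of_coprime hq hpq (by simpa using hquarter 0) (by simpa using hquarter 1)

theorem oscConj_image_LamO2_eq_iff (hq : q ≠ 0) (hk : k ≠ 0) (hpq : Nat.Coprime p q)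
    (hqodd : Odd q) :
    oscConj (lam2 p q) g '' LamO2 k (π * q) = LamO2 k (π * q) ↔ g ∈ normalizerLamO2 p q k := by
  refine ⟨fun h => mem_normalizerLamO2_of_mapsTo hq hpq hqodd (Set.mapsTo_iff_image_subset.2 h.subset),
    fun hg => ?_⟩
  have hinv := mapsTo_oscConj_LamO2 hq hk (oscInv_mem_normalizerLamO2 hq hg)
  exact (Set.RightInvOn.surjOn (fun γ _ => oscConj_oscConj_oscInv _ g γ) hinv).image_eq_of_mapsTo
    (mapsTo_oscConj_LamO2 hq hk hg)

end Normalizer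

theorem stmt_18_general (p q k : ℕ) (hq : 0 < q) (hk : 0 < k)
    (hpq : Nat.Coprime p q) (hqodd : Odd q) (g : OscG 2) :
    (Even p →
      (oscConj (lam2 p q) g '' LamO2 k (Real.pi * q) = LamO2 k (Real.pi * q) ↔
        ((∃ m₁ m₂ : ℤ, g.2.1 0 = ((m₁ : ℝ) / 2, (m₂ : ℝ) / 2))
          ∧ (∃ m₃ m₄ : ℤ, g.2.1 1 = ((m₃ : ℝ) / (2 * k), (m₄ : ℝ) / (2 * k)))
          ∧ ∃ m : ℤ, g.2.2 = m * (q * Real.pi / 2))))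
    ∧ (Odd p →
      (oscConj (lam2 p q) g '' LamO2 k (Real.pi * q) = LamO2 k (Real.pi * q) ↔
        ((∃ m₁ m₂ : ℤ, g.2.1 0 = ((m₁ : ℝ) / 2, (m₂ : ℝ) / 2))
          ∧ (∃ m₃ m₄ : ℤ, g.2.1 1 = ((m₃ : ℝ) / 2, (m₄ : ℝ) / 2))
          ∧ ∃ m : ℤ, g.2.2 = m * (q * Real.pi / 2)))) := by
  simp only [oscConj_image_LamO2_eq_iff hq.ne' hk.ne' hpq hqodd, normalizerLamO2,
    Set.mem_ofPred_eq, ← mem_scaledIntSq]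
  refine ⟨fun hpe => ?_, fun hpo => ?_⟩
  · simp [Nat.not_odd_iff_even.2 hpe]
  · have hle : g.2.1 1 ∈ scaledIntSq 2 → g.2.1 1 ∈ scaledIntSq (2 * k) :=
      fun h => scaledIntSq_le_mul hk.ne' h
    simp only [hpo, forall_const]
    tauto

/-- The normalizer of the lattice `Λ_{k,q,2} = (1/(2k))ℤ × ℤ⁴ × πqℤ` in
`Osc₂(1, p/q)` (with `q` odd) is `ℝ × (1/2)ℤ² × (1/(2k))ℤ² × (qπ/2)ℤ` when `p`
is even, and `ℝ × (1/2)ℤ⁴ × (qπ/2)ℤ` when `p` is odd. -/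
theorem stmt_18 (p q k : ℕ) (hp : 0 < p) (hq : 0 < q) (hk : 0 < k)
    (hpq : Nat.Coprime p q) (hqodd : Odd q) (g : OscG 2) :
    (Even p →
      (oscConj (lam2 p q) g '' LamO2 k (Real.pi * q) = LamO2 k (Real.pi * q) ↔
        ((∃ m₁ m₂ : ℤ, g.2.1 0 = ((m₁ : ℝ) / 2, (m₂ : ℝ) / 2))
          ∧ (∃ m₃ m₄ : ℤ, g.2.1 1 = ((m₃ : ℝ) / (2 * k), (m₄ : ℝ) / (2 * k)))
          ∧ ∃ m : ℤ, g.2.2 = m * (q * Real.pi / 2))))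
    ∧ (Odd p →
      (oscConj (lam2 p q) g '' LamO2 k (Real.pi * q) = LamO2 k (Real.pi * q) ↔
        ((∃ m₁ m₂ : ℤ, g.2.1 0 = ((m₁ : ℝ) / 2, (m₂ : ℝ) / 2))
          ∧ (∃ m₃ m₄ : ℤ, g.2.1 1 = ((m₃ : ℝ) / 2, (m₄ : ℝ) / 2))
          ∧ ∃ m : ℤ, g.2.2 = m * (q * Real.pi / 2)))) :=
  stmt_18_general p q k hq hk hpq hqodd g
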